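/- Fix d ≥ 1, vectors v_1, …, v_{d+1} ∈ ℝ^d satisfying the simplex conditions, κ_k⁺, κ_k⁻ ≥ 0 (k = 1, …, d), and an invertible d×d real matrix σ. Assume that for every β ∈ B the matrix σᵀ + β is invertible and v_i β (σᵀ+β)^{-1} v_jᵀ > −1 for all i, j ∈ {1, …, d+1}. Then there exists ε > 0 such that for every β ∈ B, every i ∈ {1, …, d+1}, and every w ∈ ℝ^d with |w| < ε, the vector v_i β (σᵀ+β)^{-1} + w lies in the interior of the convex hull of {v_1, …, v_{d+1}}. -/

import Mathlib

open scoped BigOperators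
open Matrix

/-!
The simplex conditions say that the Gram matrix `V Vᵀ` of the rows `vᵢ` is `(d+1) I - J`.
Hence `∑ⱼ vⱼ = 0`, and `N = (d+1) I - Vᵀ V` is symmetric, traceless and satisfies
`N² = (d+1) N`, so `tr (Nᵀ N) = 0` and `Vᵀ V = (d+1) I`. Thus every `x` equals
`∑ⱼ ((1 + ⟪x, vⱼ⟫) / (d+1)) vⱼ`, whose weights sum to one; the open set
`{x | ∀ j, -1 < ⟪x, vⱼ⟫}` therefore lies in the convex hull. The points `vᵢ β (σᵀ+β)⁻¹` lie in
this set and form a compact set, a continuous image of the compact set `B`, so a uniform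
thickening of it still lies in the interior of the hull.
-/

/-- The set `B` of matrices whose `k`-th column is `∑ⱼ w_{jk} vⱼᵀ` with
`w_{jk} ∈ [0, (κₖ⁺+κₖ⁻)/(d+1)]`. -/
def simplexB (d : ℕ) (v : Fin (d + 1) → Fin d → ℝ) (κp κm : Fin d → ℝ) :
    Set (Matrix (Fin d) (Fin d) ℝ) :=
  {β | ∃ w : Fin (d + 1) → Fin d → ℝ,
      (∀ j k, w j k ∈ Set.Icc (0 : ℝ) ((κp k + κm k) / (d + 1))) ∧
      ∀ a k, β a k = ∑ j, w j k * v j a}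

theorem Matrix.eq_zero_of_isSymm_of_mul_self_eq_smul {n : Type*} [Fintype n]
    {N : Matrix n n ℝ} {c : ℝ} (hsymm : N.IsSymm) (hsq : N * N = c • N) (htr : N.trace = 0) :
    N = 0 := by
  rw [← trace_conjTranspose_mul_self_eq_zero_iff, conjTranspose_eq_transpose_of_trivial, hsymm,
    hsq, trace_smul, htr, smul_zero]

section Simplex

variable {d : ℕ} {v : Fin (d + 1) → Fin d → ℝ}

theorem simplex_gram (hnorm : ∀ i, ∑ k, v i k ^ 2 = (d : ℝ))
    (hinner : ∀ i j, i ≠ j → ∑ k, v i k * v j k = -1) :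
    of v * (of v)ᵀ = ((d : ℝ) + 1) • 1 - of fun _ _ => 1 := by
  ext i j
  rcases eq_or_ne i j with rfl | hij
  · simp [mul_apply, ← sq, hnorm]
  · simp [mul_apply, hinner i j hij, one_apply_ne hij]

theorem simplex_sum_eq_zero (hG : of v * (of v)ᵀ = ((d : ℝ) + 1) • 1 - of fun _ _ => 1) :
    ∑ j, v j = 0 := by
  have hs : ∑ j, v j = (fun _ => 1) ᵥ* of v := by simp [vecMul_eq_sum]; rfl
  have h : (∑ j, v j) ⬝ᵥ (∑ j, v j) = 0 := by
    calc (∑ j, v j) ⬝ᵥ (∑ j, v j) = ((fun _ => 1) ᵥ* (of v * (of v)ᵀ)) ⬝ᵥ fun _ => 1 := by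
          rw [← vecMul_vecMul, ← dotProduct_mulVec, ← vecMul_transpose, transpose_transpose, hs]
      _ = 0 := by
          rw [hG]
          simp [dotProduct, vecMul, one_apply]
  exact dotProduct_self_eq_zero.mp h

theorem simplex_transpose_gram (hG : of v * (of v)ᵀ = ((d : ℝ) + 1) • 1 - of fun _ _ => 1) :
    (of v)ᵀ * of v = ((d : ℝ) + 1) • 1 := by
  set c : ℝ := d + 1
  set M := (of v)ᵀ * of v
  have hJV : (of fun _ _ => 1 : Matrix (Fin (d + 1)) (Fin (d + 1)) ℝ) * of v = 0 := by
    ext i k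
    simpa [mul_apply] using congrFun (simplex_sum_eq_zero hG) k
  have hMM : M * M = c • M := by
    calc M * M = (of v)ᵀ * (of v * (of v)ᵀ) * of v := by simp only [M, Matrix.mul_assoc]
      _ = c • M := by
        rw [hG, Matrix.mul_sub, Matrix.sub_mul, Matrix.mul_assoc _ (of fun _ _ => (1 : ℝ)), hJV]
        simp [M]
  have htrM : M.trace = d * c := by
    have hJ : (of fun _ _ => 1 : Matrix (Fin (d + 1)) (Fin (d + 1)) ℝ).trace = c := by
      simp [c, trace]
    rw [trace_mul_comm, hG, trace_sub, hJ, trace_smul, trace_one, Fintype.card_fin, smul_eq_mul]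
    push_cast
    ring
  have hN : c • 1 - M = 0 := by
    refine Matrix.eq_zero_of_isSymm_of_mul_self_eq_smul (c := c) ?_ ?_ ?_
    · simp [IsSymm, M, transpose_sub, transpose_mul]
    · simp only [Matrix.mul_sub, Matrix.sub_mul, hMM, Matrix.smul_mul, Matrix.mul_smul,
        Matrix.one_mul, Matrix.mul_one, smul_sub, smul_smul]
      abel
    · rw [trace_sub, trace_smul, trace_one, htrM, Fintype.card_fin, smul_eq_mul]
      ring
  exact (sub_eq_zero.mp hN).symm

theorem simplex_sum_smul_eq (hG : of v * (of v)ᵀ = ((d : ℝ) + 1) • 1 - of fun _ _ => 1)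
    (x : Fin d → ℝ) : ∑ j, ((1 + x ⬝ᵥ v j) / ((d : ℝ) + 1)) • v j = x := by
  have hT : ∑ j, (x ⬝ᵥ v j) • v j = ((d : ℝ) + 1) • x := by
    calc ∑ j, (x ⬝ᵥ v j) • v j = (of v)ᵀ *ᵥ (of v *ᵥ x) := by
          rw [mulVec_transpose, vecMul_eq_sum]
          simp [mulVec, dotProduct_comm]
          rfl
      _ = ((d : ℝ) + 1) • x := by
          rw [mulVec_mulVec, simplex_transpose_gram hG, smul_mulVec, one_mulVec]
  calc ∑ j, ((1 + x ⬝ᵥ v j) / ((d : ℝ) + 1)) • v j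
      = ((d : ℝ) + 1)⁻¹ • (∑ j, v j + ∑ j, (x ⬝ᵥ v j) • v j) := by
        rw [← Finset.sum_add_distrib, Finset.smul_sum]
        simp only [div_eq_inv_mul, mul_smul, add_smul, one_smul]
    _ = x := by rw [simplex_sum_eq_zero hG, hT, zero_add, inv_smul_smul₀ (by positivity)]

theorem setOf_neg_one_lt_dotProduct_subset_interior_convexHull
    (hG : of v * (of v)ᵀ = ((d : ℝ) + 1) • 1 - of fun _ _ => 1) :
    {x | ∀ j, -1 < x ⬝ᵥ v j} ⊆ interior (convexHull ℝ (Set.range v)) := by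
  refine interior_maximal (fun x hx => ?_) ?_
  · rw [← simplex_sum_smul_eq hG x]
    refine (convex_convexHull ℝ _).sum_mem (fun j _ => ?_) ?_
      (fun j _ => subset_convexHull ℝ _ (Set.mem_range_self j))
    · exact div_nonneg (by linarith [hx j]) (by positivity)
    · rw [← Finset.sum_div, Finset.sum_add_distrib, ← dotProduct_sum, simplex_sum_eq_zero hG,
        dotProduct_zero]
      simp [Nat.cast_add_one_ne_zero]
  · simp only [Set.ofPred_forall]
    exact isOpen_iInter_of_finite fun j =>
      isOpen_lt continuous_const (continuous_id.dotProduct continuous_const)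

end Simplex

theorem isCompact_simplexB (d : ℕ) (v : Fin (d + 1) → Fin d → ℝ) (κp κm : Fin d → ℝ) :
    IsCompact (simplexB d v κp κm) := by
  have himage : simplexB d v κp κm =
      (fun w : Fin (d + 1) → Fin d → ℝ => of fun a k => ∑ j, w j k * v j a) ''
        Set.Icc 0 (fun _ k => (κp k + κm k) / (d + 1)) := by
    ext β
    simp only [simplexB, Set.mem_Icc, Set.mem_image, Set.mem_ofPred_eq, Pi.le_def, ← forall_and]
    constructor
    · rintro ⟨w, hw, hβ⟩
      exact ⟨w, hw, by ext a k; exact (hβ a k).symm⟩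
    · rintro ⟨w, hw, rfl⟩
      exact ⟨w, hw, fun a k => rfl⟩
  rw [himage]
  exact isCompact_Icc.image (by fun_prop)

theorem continuousAt_vecMul_vecMul_inv {n : Type*} [Fintype n] [DecidableEq n] (x : n → ℝ)
    {A β : Matrix n n ℝ} (h : IsUnit (A + β)) :
    ContinuousAt (fun γ => x ᵥ* γ ᵥ* (A + γ)⁻¹) β := by
  have hdet : (A + β).det ≠ 0 := ((isUnit_iff_isUnit_det _).mp h).ne_zero
  have hinv : ContinuousAt (fun γ => (A + γ)⁻¹) β :=
    (continuousAt_matrix_inv _ (by rw [Ring.inverse_eq_inv']; exact continuousAt_inv₀ hdet)).comp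
      (continuous_const.add continuous_id).continuousAt
  have hF : Continuous fun p : Matrix n n ℝ × Matrix n n ℝ => x ᵥ* p.1 ᵥ* p.2 :=
    (continuous_const.matrix_vecMul continuous_fst).matrix_vecMul continuous_snd
  exact hF.continuousAt.comp (f := fun γ => (γ, (A + γ)⁻¹)) (continuousAt_id.prodMk hinv)

theorem pi_norm_le_sqrt_sum_sq {ι : Type*} [Fintype ι] (w : ι → ℝ) : ‖w‖ ≤ √(∑ k, w k ^ 2) :=
  (pi_norm_le_iff_of_nonneg (Real.sqrt_nonneg _)).2 fun k => by
    rw [Real.norm_eq_abs]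
    exact Real.abs_le_sqrt (Finset.single_le_sum (fun i _ => sq_nonneg (w i)) (Finset.mem_univ k))

theorem uniform_interior_convexHull_general (d : ℕ)
    (v : Fin (d + 1) → Fin d → ℝ)
    (hnorm : ∀ i, ∑ k, v i k ^ 2 = (d : ℝ))
    (hinner : ∀ i j, i ≠ j → ∑ k, v i k * v j k = -1)
    (κp κm : Fin d → ℝ)
    (σ : Matrix (Fin d) (Fin d) ℝ)
    (hass : ∀ β ∈ simplexB d v κp κm,
      IsUnit (σᵀ + β) ∧
      ∀ i j, Matrix.vecMul (Matrix.vecMul (v i) β) (σᵀ + β)⁻¹ ⬝ᵥ v j > -1) :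
    ∃ ε > 0, ∀ β ∈ simplexB d v κp κm, ∀ i, ∀ w : Fin d → ℝ,
      Real.sqrt (∑ k, w k ^ 2) < ε →
      Matrix.vecMul (Matrix.vecMul (v i) β) (σᵀ + β)⁻¹ + w
        ∈ interior (convexHull ℝ (Set.range v)) := by
  set K := ⋃ i, (fun β => v i ᵥ* β ᵥ* (σᵀ + β)⁻¹) '' simplexB d v κp κm
  have hK : IsCompact K := isCompact_iUnion fun i =>
    (isCompact_simplexB d v κp κm).image_of_continuousOn fun β hβ =>
      (continuousAt_vecMul_vecMul_inv (v i) (hass β hβ).1).continuousWithinAt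
  have hKU : K ⊆ interior (convexHull ℝ (Set.range v)) := by
    simp only [K, Set.iUnion_subset_iff, Set.image_subset_iff]
    exact fun i β hβ => setOf_neg_one_lt_dotProduct_subset_interior_convexHull
      (simplex_gram hnorm hinner) fun j => (hass β hβ).2 i j
  obtain ⟨ε, hε, hεK⟩ := hK.exists_thickening_subset_open isOpen_interior hKU
  refine ⟨ε, hε, fun β hβ i w hw => hεK (Metric.ball_subset_thickening
    (Set.mem_iUnion_of_mem i (Set.mem_image_of_mem _ hβ)) ε ?_)⟩
  rw [Metric.mem_ball, dist_self_add_left]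
  exact (pi_norm_le_sqrt_sum_sq w).trans_lt hw

/-- under Assumption 2.1, uniformly over `β ∈ B`, the row vectors
`vᵢ β (σᵀ+β)⁻¹` stay in the interior of the convex hull of the simplex vectors,
even after perturbation by any `w` with `|w| < ε`. -/
theorem uniform_interior_convexHull (d : ℕ) (hd : 1 ≤ d)
    (v : Fin (d + 1) → Fin d → ℝ)
    (hnorm : ∀ i, ∑ k, v i k ^ 2 = (d : ℝ))
    (hinner : ∀ i j, i ≠ j → ∑ k, v i k * v j k = -1)
    (κp κm : Fin d → ℝ) (hκp : ∀ k, 0 ≤ κp k) (hκm : ∀ k, 0 ≤ κm k)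
    (σ : Matrix (Fin d) (Fin d) ℝ) (hσ : IsUnit σ.det)
    (hass : ∀ β ∈ simplexB d v κp κm,
      IsUnit (σᵀ + β) ∧
      ∀ i j, Matrix.vecMul (Matrix.vecMul (v i) β) (σᵀ + β)⁻¹ ⬝ᵥ v j > -1) :
    ∃ ε > 0, ∀ β ∈ simplexB d v κp κm, ∀ i, ∀ w : Fin d → ℝ,
      Real.sqrt (∑ k, w k ^ 2) < ε →
      Matrix.vecMul (Matrix.vecMul (v i) β) (σᵀ + β)⁻¹ + w
        ∈ interior (convexHull ℝ (Set.range v)) :=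
  uniform_interior_convexHull_general d v hnorm hinner κp κm σ hass
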